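/- arXiv:2007.07433 — 3 statements merged into one kernel-verified Lean document; each statement's English description precedes it below -/
import Mathlib

section
/- Let M₁ = Diag(1,−1,0) and M₂ = Diag(0,1,−1) in S³. Then the cone T = {X ∈ S³_+ : X₁₁ = X₂₂ = X₃₃} is not rank-one generated; in particular, for w = (1,1,√2)ᵀ and z = (−1,1,0)ᵀ, the rank-two matrix X = wwᵀ + zzᵀ lies in T but its range contains no nonzero vector x with x₁² = x₂² = x₃². -/
open Matrix Set

noncomputable section

/-- The set of rank-one (outer product) matrices `x xᵀ`. -/
def RankOneSet (n : ℕ) : Set (Matrix (Fin n) (Fin n) ℝ) :=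
  {X | ∃ x : Fin n → ℝ, X = vecMulVec x x}

/-- A set of PSD matrices is rank-one generated if it equals the convex hull of its
rank-one members. -/
def IsROG {n : ℕ} (S : Set (Matrix (Fin n) (Fin n) ℝ)) : Prop :=
  S = convexHull ℝ (S ∩ RankOneSet n)

/-- `ℝ₊X` is an extreme ray of `S`: `X ∈ S`, `X ≠ 0`, and whenever `X = (Y+Z)/2` with
`Y, Z ∈ S`, both `Y` and `Z` lie on the ray `ℝ₊X`. -/
def IsExtremeRay' {n : ℕ} (S : Set (Matrix (Fin n) (Fin n) ℝ))
    (X : Matrix (Fin n) (Fin n) ℝ) : Prop :=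
  X ∈ S ∧ X ≠ 0 ∧ ∀ Y ∈ S, ∀ Z ∈ S, X = (1/2 : ℝ) • (Y + Z) →
    (∃ α : ℝ, 0 ≤ α ∧ Y = α • X) ∧ (∃ β : ℝ, 0 ≤ β ∧ Z = β • X)

/-- `S(𝓜) = {X ⪰ 0 : ⟨N, X⟩ ≥ 0 ∀ N ∈ 𝓜}` with the trace inner product. -/
def SCone {n : ℕ} (𝓜 : Set (Matrix (Fin n) (Fin n) ℝ)) : Set (Matrix (Fin n) (Fin n) ℝ) :=
  {X | X.PosSemidef ∧ ∀ N ∈ 𝓜, 0 ≤ (N * X).trace}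

/-- `T(𝓜) = {X ⪰ 0 : ⟨N, X⟩ = 0 ∀ N ∈ 𝓜}` with the trace inner product. -/
def TCone {n : ℕ} (𝓜 : Set (Matrix (Fin n) (Fin n) ℝ)) : Set (Matrix (Fin n) (Fin n) ℝ) :=
  {X | X.PosSemidef ∧ ∀ N ∈ 𝓜, (N * X).trace = 0}

/-- The cone `{X ∈ S³₊ : X₁₁ = X₂₂ = X₃₃}`. -/
def T16 : Set (Matrix (Fin 3) (Fin 3) ℝ) :=
  {X | X.PosSemidef ∧ X 0 0 = X 1 1 ∧ X 1 1 = X 2 2}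

def w16 : Fin 3 → ℝ := ![1, 1, Real.sqrt 2]

def z16 : Fin 3 → ℝ := ![-1, 1, 0]

def X16 : Matrix (Fin 3) (Fin 3) ℝ := vecMulVec w16 w16 + vecMulVec z16 z16

/-!
`X16 = wwᵀ + zzᵀ` with `w ⊥ z`, so `X16 = AᵀA` where `AAᵀ = diag(‖w‖², ‖z‖²)` is invertible:
rank two. A point `a w + b z = (a - b, a + b, √2 a)` of the range with equal squared coordinates
forces `ab = 0` and `a² = b²`, hence `a = b = 0`. The cone is not rank-one generated because the
functional `Y ↦ ⟨pqᵀ, Y⟩` with `p = (1, 0, -1)`, `q = (1, 1, 0)` is `(x₀ - x₂)(x₀ + x₁) ≥ 0` on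
the rank-one elements `xxᵀ` of `T16` (where `|x₀| = |x₁| = |x₂|`), hence on their convex hull,
yet equals `2 - 2√2 < 0` at `X16 ∈ T16`.
-/

namespace Matrix

variable {m R : Type*}

theorem vecMulVec_add_vecMulVec_eq_transpose_mul [CommSemiring R] (u v : m → R) :
    vecMulVec u u + vecMulVec v v = (of ![u, v])ᵀ * of ![u, v] := by
  ext i j
  simp [mul_apply, Fin.sum_univ_two, vecMulVec_apply]

theorem vecMulVec_add_vecMulVec_mulVec [Fintype m] [CommSemiring R] (u v y : m → R) :
    (vecMulVec u u + vecMulVec v v) *ᵥ y = (u ⬝ᵥ y) • u + (v ⬝ᵥ y) • v := by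
  simp [add_mulVec, vecMulVec_mulVec]

theorem of_mul_transpose_eq_diagonal_of_dotProduct_eq_zero [Fintype m] [CommSemiring R]
    {u v : m → R} (huv : u ⬝ᵥ v = 0) :
    of ![u, v] * (of ![u, v])ᵀ = diagonal ![u ⬝ᵥ u, v ⬝ᵥ v] := by
  ext i j
  fin_cases i <;> fin_cases j <;> simp [mul_apply, dotProduct, ← huv, mul_comm]

theorem rank_vecMulVec_add_vecMulVec_of_dotProduct_eq_zero [Fintype m] [Field R] [LinearOrder R]
    [IsStrictOrderedRing R] {u v : m → R} (hu : u ≠ 0) (hv : v ≠ 0) (huv : u ⬝ᵥ v = 0) :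
    (vecMulVec u u + vecMulVec v v).rank = 2 := by
  classical
  have hdiag : ∀ i, ![u ⬝ᵥ u, v ⬝ᵥ v] i ≠ 0 := by
    intro i
    fin_cases i <;> simpa [dotProduct_self_eq_zero]
  rw [vecMulVec_add_vecMulVec_eq_transpose_mul, rank_transpose_mul_self,
    ← rank_self_mul_transpose, of_mul_transpose_eq_diagonal_of_dotProduct_eq_zero huv,
    rank_diagonal, Fintype.card_subtype, Finset.filter_true_of_mem fun i _ ↦ hdiag i]
  rfl

end Matrix

theorem not_isROG_of_trace_mul_neg {n : ℕ} {S : Set (Matrix (Fin n) (Fin n) ℝ)}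
    (C : Matrix (Fin n) (Fin n) ℝ) (hC : ∀ x, vecMulVec x x ∈ S → 0 ≤ C *ᵥ x ⬝ᵥ x)
    {X : Matrix (Fin n) (Fin n) ℝ} (hX : X ∈ S) (hCX : (C * X).trace < 0) : ¬ IsROG S := by
  intro hS
  have hlin : IsLinearMap ℝ fun Y : Matrix (Fin n) (Fin n) ℝ ↦ (C * Y).trace :=
    ⟨fun Y Z ↦ by rw [Matrix.mul_add, trace_add],
      fun c Y ↦ by rw [Matrix.mul_smul, trace_smul]⟩
  have hsub : S ∩ RankOneSet n ⊆ {Y | 0 ≤ (C * Y).trace} := by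
    rintro _ ⟨hx, x, rfl⟩
    simpa [mul_vecMulVec, trace_vecMulVec] using hC x hx
  rw [hS] at hX
  exact hCX.not_ge (convexHull_min hsub (convex_halfSpace_ge hlin 0) hX)

theorem sub_mul_add_nonneg_of_sq_eq_sq {a b c : ℝ} (hab : a ^ 2 = b ^ 2) (hbc : b ^ 2 = c ^ 2) :
    0 ≤ (a - c) * (a + b) := by
  rcases sq_eq_sq_iff_eq_or_eq_neg.mp hab with rfl | rfl <;>
    rcases sq_eq_sq_iff_eq_or_eq_neg.mp hbc with rfl | rfl <;> nlinarith

theorem eq_zero_and_eq_zero_of_sq_eq_sq {a b : ℝ} (h₁ : (a - b) ^ 2 = (a + b) ^ 2)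
    (h₂ : (a + b) ^ 2 = 2 * a ^ 2) : a = 0 ∧ b = 0 := by
  have hab : a * b = 0 := by linear_combination h₁ / (-4)
  have hb : b ^ 2 = a ^ 2 := by linear_combination h₂ - 2 * hab
  have ha : a ^ 4 = 0 := by linear_combination (a * b) * hab - a ^ 2 * hb
  have ha0 : a = 0 := pow_eq_zero_iff (by norm_num) |>.mp ha
  exact ⟨ha0, pow_eq_zero_iff two_ne_zero |>.mp (by rw [hb, ha0]; ring)⟩

theorem X16_mem_T16 : X16 ∈ T16 := by
  have h2 : √2 * √2 = 2 := Real.mul_self_sqrt zero_le_two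
  refine ⟨?_, ?_, ?_⟩
  · simpa [X16] using
      (posSemidef_vecMulVec_self_star w16).add (posSemidef_vecMulVec_self_star z16)
  · simp [X16, w16, z16]
  · simp [X16, w16, z16, h2]
    norm_num

theorem rank_X16 : X16.rank = 2 :=
  rank_vecMulVec_add_vecMulVec_of_dotProduct_eq_zero (by simp [w16]) (by simp [z16])
    (by simp [w16, z16, dotProduct, Fin.sum_univ_three])

theorem not_isROG_T16 : ¬ IsROG T16 := by
  refine not_isROG_of_trace_mul_neg (vecMulVec ![1, 0, -1] ![1, 1, 0]) ?_ X16_mem_T16 ?_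
  · rintro x ⟨-, h01, h12⟩
    simp only [vecMulVec_apply, ← sq] at h01 h12
    rw [vecMulVec_mulVec]
    convert sub_mul_add_nonneg_of_sq_eq_sq h01 h12 using 1
    simp [dotProduct, Fin.sum_univ_three]
    ring
  · simp [X16, w16, z16, trace, mul_apply, Fin.sum_univ_three]
    linarith [Real.one_lt_sqrt_two]

theorem stmt_16 :
    ¬ IsROG T16 ∧ X16 ∈ T16 ∧ X16.rank = 2 ∧
      ∀ x : Fin 3 → ℝ, (∃ y : Fin 3 → ℝ, X16.mulVec y = x) →
        (x 0) ^ 2 = (x 1) ^ 2 → (x 1) ^ 2 = (x 2) ^ 2 → x = 0 := by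
  refine ⟨not_isROG_T16, X16_mem_T16, rank_X16, ?_⟩
  rintro x ⟨y, rfl⟩ h01 h12
  rw [X16, vecMulVec_add_vecMulVec_mulVec] at h01 h12 ⊢
  generalize w16 ⬝ᵥ y = a at *
  generalize z16 ⬝ᵥ y = b at *
  simp only [w16, z16, smul_cons, smul_eq_mul, mul_one, Matrix.smul_empty, mul_neg, mul_zero,
    Pi.add_apply, cons_val_zero, cons_val_one, cons_val, add_zero, mul_pow, Nat.ofNat_nonneg,
    Real.sq_sqrt] at h01 h12
  obtain ⟨rfl, rfl⟩ := eq_zero_and_eq_zero_of_sq_eq_sq (a := a) (b := b)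
    (by linear_combination h01) (by linear_combination h12)
  simp
end
end

section
/- (Dines) Let M₁, M₂ ∈ S^n and suppose that for every (α₁,α₂) ≠ (0,0) the combination α₁M₁ + α₂M₂ is not positive semidefinite. Then the joint image map x ↦ (xᵀM₁x, xᵀM₂x) is surjective onto ℝ². -/
open Matrix Set

noncomputable section

/-!
By Dines' theorem the joint range `{(Q₁ x, Q₂ x)}` of two real quadratic forms is a convex
cone. For any quadratic form `Q`, the pair `c • a + s • b, -s • a + c • b` has
`Q`-sum `(c ^ 2 + s ^ 2) • (Q a + Q b)`. Let `r = (Q₁ a + Q₁ b, Q₂ a + Q₂ b)`, let `G` be the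
form measuring the deviation of `(Q₁ x, Q₂ x)` from the line `ℝ r`, and `F` its component
along `r`; then `G a + G b = 0 < F a + F b`. The intermediate value theorem gives `(c, s)` for
which both vectors of the pair are `G`-isotropic, and one of them has `F > 0`, i.e. is mapped
onto the open ray through `r`.

A convex cone in a finite-dimensional space meeting every open half-space is dense (Hahn–Banach
applied to its closure), hence everything. For the joint range of `xᵀ M₁ x` and `xᵀ M₂ x`,
missing the half-plane `{α u + β v < 0}` means exactly that `α • M₁ + β • M₂` is positive
semidefinite.
-/

namespace QuadraticMap

section Rotation

variable {R M N : Type*} [CommRing R] [AddCommGroup M] [Module R M] [AddCommGroup N]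
  [Module R N]

lemma map_smul_add_smul (Q : QuadraticMap R M N) (a b : M) (c s : R) :
    Q (c • a + s • b) = (c * c) • Q a + (s * s) • Q b + (c * s) • polar Q a b := by
  simp only [QuadraticMap.map_add Q, QuadraticMap.map_smul, polar_smul_left, polar_smul_right]
  module

lemma map_rotate_add (Q : QuadraticMap R M N) (a b : M) (c s : R) :
    Q (c • a + s • b) + Q (-s • a + c • b) = (c ^ 2 + s ^ 2) • (Q a + Q b) := by
  simp only [map_smul_add_smul]
  module

end Rotation

variable {V : Type*} [AddCommGroup V] [Module ℝ V]

lemma exists_isotropic_pos_of_add_eq_zero (G F : QuadraticMap ℝ V ℝ) {a b : V}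
    (hG : G a + G b = 0) (hF : 0 < F a + F b) : ∃ x, G x = 0 ∧ 0 < F x := by
  have hcont : Continuous fun τ : ℝ => G ((1 - τ) • a + τ • b) := by
    simp only [map_smul_add_smul, smul_eq_mul]
    fun_prop
  obtain ⟨τ, -, hτ⟩ : ∃ τ ∈ uIcc (0 : ℝ) 1, G ((1 - τ) • a + τ • b) = 0 := by
    refine intermediate_value_uIcc hcont.continuousOn ?_
    simp only [sub_zero, zero_smul, one_smul, add_zero, zero_add, sub_self, mem_uIcc]
    rw [eq_neg_of_add_eq_zero_right hG]
    rcases le_total (G a) 0 with h | h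
    · exact Or.inl ⟨h, by linarith⟩
    · exact Or.inr ⟨by linarith, h⟩
  have hnorm : 0 < (1 - τ) ^ 2 + τ ^ 2 := by nlinarith [sq_nonneg (1 - 2 * τ)]
  have hGrot := G.map_rotate_add a b (1 - τ) τ
  have hFrot := F.map_rotate_add a b (1 - τ) τ
  rw [hτ, hG, smul_zero, zero_add] at hGrot
  rcases lt_or_ge 0 (F ((1 - τ) • a + τ • b)) with hx | hx
  · exact ⟨_, hτ, hx⟩
  · refine ⟨_, hGrot, ?_⟩
    have := mul_pos hnorm hF
    rw [smul_eq_mul] at hFrot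
    linarith

lemma exists_map_eq_smul (Q₁ Q₂ : QuadraticMap ℝ V ℝ) (x : V) {t : ℝ} (ht : 0 ≤ t) :
    ∃ y, (Q₁ y, Q₂ y) = t • (Q₁ x, Q₂ x) := by
  refine ⟨√t • x, ?_⟩
  simp only [QuadraticMap.map_smul, smul_eq_mul, Real.mul_self_sqrt ht, Prod.smul_mk]

lemma exists_map_eq_add (Q₁ Q₂ : QuadraticMap ℝ V ℝ) (a b : V) :
    ∃ x, (Q₁ x, Q₂ x) = (Q₁ a, Q₂ a) + (Q₁ b, Q₂ b) := by
  rw [Prod.mk_add_mk]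
  set r₁ := Q₁ a + Q₁ b
  set r₂ := Q₂ a + Q₂ b
  rcases eq_or_ne (r₁ ^ 2 + r₂ ^ 2) 0 with hr | hr
  · refine ⟨0, ?_⟩
    have h₁ : r₁ = 0 := by nlinarith [sq_nonneg r₁, sq_nonneg r₂]
    have h₂ : r₂ = 0 := by nlinarith [sq_nonneg r₁, sq_nonneg r₂]
    rw [map_zero, map_zero, h₁, h₂]
  have hr : 0 < r₁ ^ 2 + r₂ ^ 2 := lt_of_le_of_ne (by positivity) (Ne.symm hr)
  obtain ⟨x, hG, hF⟩ :=
    exists_isotropic_pos_of_add_eq_zero (r₁ • Q₂ - r₂ • Q₁) (r₁ • Q₁ + r₂ • Q₂) (a := a) (b := b)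
    (by simp only [_root_.sub_apply, _root_.smul_apply, smul_eq_mul]; ring)
    (by simp only [_root_.add_apply, _root_.smul_apply, smul_eq_mul]; nlinarith)
  simp only [_root_.sub_apply, _root_.add_apply, _root_.smul_apply, smul_eq_mul] at hG hF
  obtain ⟨y, hy⟩ := exists_map_eq_smul Q₁ Q₂ x (div_nonneg hr.le hF.le)
  refine ⟨y, hy.trans ?_⟩
  rw [Prod.smul_mk, smul_eq_mul, smul_eq_mul, Prod.mk.injEq]
  constructor
  · field_simp
    linear_combination (-r₂) * hG
  · field_simp
    linear_combination r₁ * hG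

def jointRange (Q₁ Q₂ : QuadraticMap ℝ V ℝ) : PointedCone ℝ (ℝ × ℝ) where
  carrier := range fun x => (Q₁ x, Q₂ x)
  add_mem' := by
    rintro _ _ ⟨a, rfl⟩ ⟨b, rfl⟩
    exact exists_map_eq_add Q₁ Q₂ a b
  zero_mem' := ⟨0, by simp⟩
  smul_mem' := by
    rintro ⟨t, ht⟩ _ ⟨x, rfl⟩
    exact exists_map_eq_smul Q₁ Q₂ x ht

end QuadraticMap

section Separation

variable {E : Type*} [NormedAddCommGroup E] [NormedSpace ℝ E] [FiniteDimensional ℝ E]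

lemma Convex.eq_univ_of_dense {s : Set E} (hs : Convex ℝ s) (hd : Dense s) : s = univ := by
  have hspan : affineSpan ℝ s = ⊤ := by
    rw [← AffineSubspace.coe_eq_univ_iff, ← univ_subset_iff, ← hd.closure_eq]
    exact closure_minimal (subset_affineSpan ℝ s) (AffineSubspace.closed_of_finiteDimensional _)
  have hint := hs.interior_closure_eq_interior_of_nonempty_interior
    (hs.interior_nonempty_iff_affineSpan_eq_top.2 hspan)
  rw [hd.closure_eq, interior_univ] at hint
  exact univ_subset_iff.1 (hint ▸ interior_subset)

lemma PointedCone.eq_top_of_forall_exists_neg (C : PointedCone ℝ E)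
    (h : ∀ f : E →L[ℝ] ℝ, f ≠ 0 → ∃ x ∈ C, f x < 0) : C = ⊤ := by
  suffices hd : Dense (C : Set E) from
    Submodule.eq_top_iff'.2 fun y =>
      SetLike.mem_coe.1 <| (C.convex.eq_univ_of_dense hd).symm ▸ mem_univ y
  by_contra hnd
  obtain ⟨y, hy⟩ := (ne_univ_iff_exists_notMem _).1 (mt dense_iff_closure_eq.2 hnd)
  obtain ⟨f, u, hfu, huy⟩ :=
    geometric_hahn_banach_closed_point C.convex.closure isClosed_closure hy
  have hu : 0 < u := by simpa using hfu 0 (subset_closure C.zero_mem)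
  have hf : f ≠ 0 := by
    rintro rfl
    exact (hu.trans huy).ne' rfl
  obtain ⟨x, hx, hfx⟩ := h (-f) (neg_ne_zero.2 hf)
  rw [_root_.neg_apply, neg_lt_zero] at hfx
  -- scaling `x` so that `f` reaches the level `u` contradicts the separation
  have := hfu ((u / f x) • x) (subset_closure (C.smul_mem (by positivity) hx))
  rw [map_smul, smul_eq_mul, div_mul_cancel₀ _ hfx.ne'] at this
  exact lt_irrefl _ this

end Separation

lemma Matrix.toQuadraticForm'_apply {ι : Type*} [Fintype ι] [DecidableEq ι]
    (A : Matrix ι ι ℝ) (x : ι → ℝ) : A.toQuadraticForm' x = x ⬝ᵥ A *ᵥ x := by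
  simp [Matrix.toQuadraticForm', Matrix.toLinearMap₂'_apply']

lemma Matrix.exists_dotProduct_mulVec_neg {ι : Type*} [Fintype ι] {A : Matrix ι ι ℝ}
    (hA : A.IsSymm) (h : ¬A.PosSemidef) : ∃ x, x ⬝ᵥ A *ᵥ x < 0 := by
  contrapose! h
  exact .of_dotProduct_mulVec_nonneg (isHermitian_iff_isSymm.2 hA) (by simpa using h)

lemma ContinuousLinearMap.apply_eq_fst_add_snd (f : ℝ × ℝ →L[ℝ] ℝ) (p : ℝ × ℝ) :
    f p = f (1, 0) * p.1 + f (0, 1) * p.2 := by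
  calc f p = f (p.1 • (1, 0) + p.2 • (0, 1)) := by congr 1; ext <;> simp
    _ = f (1, 0) * p.1 + f (0, 1) * p.2 := by
      rw [map_add, map_smul, map_smul, smul_eq_mul, smul_eq_mul, mul_comm, mul_comm p.2]

theorem stmt_18 {n : ℕ} (M₁ M₂ : Matrix (Fin n) (Fin n) ℝ)
    (h₁ : M₁.IsSymm) (h₂ : M₂.IsSymm)
    (h : ∀ α β : ℝ, (α, β) ≠ (0, 0) → ¬ (α • M₁ + β • M₂).PosSemidef) :
    ∀ y₁ y₂ : ℝ, ∃ x : Fin n → ℝ, x ⬝ᵥ M₁.mulVec x = y₁ ∧ x ⬝ᵥ M₂.mulVec x = y₂ := by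
  have htop : QuadraticMap.jointRange M₁.toQuadraticForm' M₂.toQuadraticForm' = ⊤ := by
    refine PointedCone.eq_top_of_forall_exists_neg _ fun f hf => ?_
    have hne : (f (1, 0), f (0, 1)) ≠ (0, 0) := by
      intro h0
      rw [Prod.mk.injEq] at h0
      refine hf (ContinuousLinearMap.ext fun p => ?_)
      rw [f.apply_eq_fst_add_snd, h0.1, h0.2]
      simp
    obtain ⟨x, hx⟩ :=
      Matrix.exists_dotProduct_mulVec_neg ((h₁.smul _).add (h₂.smul _)) (h _ _ hne)
    refine ⟨_, ⟨x, rfl⟩, ?_⟩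
    rw [f.apply_eq_fst_add_snd]
    simpa [Matrix.toQuadraticForm'_apply, add_mulVec, smul_mulVec] using hx
  intro y₁ y₂
  obtain ⟨x, hx⟩ : (y₁, y₂) ∈ QuadraticMap.jointRange M₁.toQuadraticForm' M₂.toQuadraticForm' :=
    htop ▸ Submodule.mem_top
  simp only [Matrix.toQuadraticForm'_apply, Prod.mk.injEq] at hx
  exact ⟨x, hx⟩
end
end

section
/- Suppose M₁, M₂ ∈ S^n span ℝⁿ in the sense that span(range(M₁) ∪ range(M₂)) = ℝⁿ with n ≥ 4, and no nonzero linear combination α₁M₁ + α₂M₂ is positive semidefinite. Then there exist α₁, α₂ with rank(α₁M₁ + α₂M₂) ≥ 3. -/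
/-! If every combination had rank at most 2, then `rank M₁ + rank M₂ ≤ 4 ≤ n`, while the two
ranges together span `ℝⁿ`; so the ranges are independent. For symmetric matrices the kernels
are the orthogonal complements of the ranges, hence meet trivially too. Both facts together make
`M₁ + M₂` injective, of rank `n ≥ 4`. -/

open Matrix Set

noncomputable section

theorem Matrix.ker_inf_ker_eq_bot_of_range_transpose_sup_eq_top {m n R : Type*} [Fintype m]
    [Fintype n] [DecidableEq n] [CommRing R] {A B : Matrix m n R}
    (hspan : LinearMap.range Aᵀ.mulVecLin ⊔ LinearMap.range Bᵀ.mulVecLin = ⊤) :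
    LinearMap.ker A.mulVecLin ⊓ LinearMap.ker B.mulVecLin = ⊥ := by
  refine eq_bot_iff.mpr fun x hx => (Submodule.mem_bot R).mpr ?_
  obtain ⟨hxA, hxB⟩ := Submodule.mem_inf.mp hx
  rw [LinearMap.mem_ker, mulVecLin_apply] at hxA hxB
  refine dotProduct_eq_zero x fun y => ?_
  have hy : y ∈ LinearMap.range Aᵀ.mulVecLin ⊔ LinearMap.range Bᵀ.mulVecLin :=
    hspan ▸ Submodule.mem_top
  obtain ⟨_, ⟨u, rfl⟩, _, ⟨v, rfl⟩, rfl⟩ := Submodule.mem_sup.mp hy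
  simp only [mulVecLin_apply, dotProduct_add, dotProduct_mulVec, vecMul_transpose, hxA, hxB,
    zero_dotProduct, add_zero]

theorem LinearMap.ker_add_eq_bot_of_disjoint {R M N : Type*} [Ring R] [AddCommGroup M]
    [AddCommGroup N] [Module R M] [Module R N] {f g : M →ₗ[R] N}
    (hrange : Disjoint (range f) (range g)) (hker : Disjoint (ker f) (ker g)) :
    ker (f + g) = ⊥ := by
  refine (ker_eq_bot').mpr fun x hx => ?_
  have hfx : f x = 0 := by
    refine (Submodule.disjoint_def.mp hrange) _ (mem_range_self f x) ?_
    rw [eq_neg_of_add_eq_zero_left hx]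
    exact neg_mem (mem_range_self g x)
  have hgx : g x = 0 := by simpa [hfx] using hx
  exact Submodule.disjoint_def.mp hker x hfx hgx

theorem Matrix.rank_add_eq_card_of_isSymm {n K : Type*} [Fintype n] [DecidableEq n] [Field K]
    {A B : Matrix n n K} (hA : A.IsSymm) (hB : B.IsSymm)
    (hspan : LinearMap.range A.mulVecLin ⊔ LinearMap.range B.mulVecLin = ⊤)
    (hrank : A.rank + B.rank ≤ Fintype.card n) :
    (A + B).rank = Fintype.card n := by
  have hrange : Disjoint (LinearMap.range A.mulVecLin) (LinearMap.range B.mulVecLin) := by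
    have := Submodule.finrank_sup_add_finrank_inf_eq (LinearMap.range A.mulVecLin)
      (LinearMap.range B.mulVecLin)
    rw [hspan, finrank_top, Module.finrank_fintype_fun_eq_card] at this
    rw [disjoint_iff, ← Submodule.finrank_eq_zero]
    exact Nat.eq_zero_of_le_zero (by rw [rank, rank] at hrank; omega)
  have hker : Disjoint (LinearMap.ker A.mulVecLin) (LinearMap.ker B.mulVecLin) := by
    rw [disjoint_iff]
    exact ker_inf_ker_eq_bot_of_range_transpose_sup_eq_top (by rwa [hA.eq, hB.eq])
  have hinj := LinearMap.ker_add_eq_bot_of_disjoint hrange hker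
  rw [← mulVecLin_add, LinearMap.ker_eq_bot] at hinj
  rw [rank, LinearMap.finrank_range_of_inj hinj, Module.finrank_fintype_fun_eq_card]

theorem stmt_19_general {n : ℕ} (hn : 4 ≤ n) (M₁ M₂ : Matrix (Fin n) (Fin n) ℝ)
    (h₁ : M₁.IsSymm) (h₂ : M₂.IsSymm)
    (hspan : LinearMap.range M₁.mulVecLin ⊔ LinearMap.range M₂.mulVecLin = ⊤) :
    ∃ α β : ℝ, 3 ≤ (α • M₁ + β • M₂).rank := by
  by_contra! hlow
  have hr₁ : M₁.rank < 3 := by simpa using hlow 1 0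
  have hr₂ : M₂.rank < 3 := by simpa using hlow 0 1
  have hfull := rank_add_eq_card_of_isSymm h₁ h₂ hspan (by rw [Fintype.card_fin]; omega)
  have := hlow 1 1
  rw [one_smul, one_smul, hfull, Fintype.card_fin] at this
  omega

theorem stmt_19 {n : ℕ} (hn : 4 ≤ n) (M₁ M₂ : Matrix (Fin n) (Fin n) ℝ)
    (h₁ : M₁.IsSymm) (h₂ : M₂.IsSymm)
    (hspan : LinearMap.range M₁.mulVecLin ⊔ LinearMap.range M₂.mulVecLin = ⊤)
    (h : ∀ α β : ℝ, (α, β) ≠ (0, 0) → ¬ (α • M₁ + β • M₂).PosSemidef) :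
    ∃ α β : ℝ, 3 ≤ (α • M₁ + β • M₂).rank :=
  stmt_19_general hn M₁ M₂ h₁ h₂ hspan
end
end
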